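/- arXiv:2212.04034 — 2 statements merged into one kernel-verified Lean document; each statement's English description precedes it below -/
import Mathlib

section
/- Let U ⊆ ℂ be open and φ : U → ℝ smooth. With K := −2 e^{−2φ} ∂_z∂_{z̄}φ, K_{;z̄z̄} := ∂_{z̄}²K − 2(∂_{z̄}φ)(∂_{z̄}K), K_{;z̄z̄z} := ∂_z K_{;z̄z̄}, and K_{;z̄z̄zz} := ∂_z K_{;z̄z̄z} − 2(∂_zφ) K_{;z̄z̄z}, the function K_{;z̄z̄zz} is real-valued on U, i.e. its imaginary part vanishes identically. -/
open Complex
open scoped ContDiff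

/-- Partial derivative in the `x`-direction (real coordinate). -/
noncomputable def pdx (f : ℂ → ℂ) (z : ℂ) : ℂ := fderiv ℝ f z 1

/-- Partial derivative in the `y`-direction (real coordinate). -/
noncomputable def pdy (f : ℂ → ℂ) (z : ℂ) : ℂ := fderiv ℝ f z Complex.I

/-- Wirtinger derivative `∂_z = (1/2)(∂_x - i ∂_y)`. -/
noncomputable def pdz (f : ℂ → ℂ) (z : ℂ) : ℂ := (1/2) * (pdx f z - Complex.I * pdy f z)

/-- Wirtinger derivative `∂_z̄ = (1/2)(∂_x + i ∂_y)`. -/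
noncomputable def pdzbar (f : ℂ → ℂ) (z : ℂ) : ℂ := (1/2) * (pdx f z + Complex.I * pdy f z)

/-- The complexification of a real-valued function. -/
noncomputable def phiC (φ : ℂ → ℝ) : ℂ → ℂ := fun z => (φ z : ℂ)

/-- The Gauss curvature `K = -2 e^{-2φ} ∂_z ∂_z̄ φ` of the metric `g = 2 e^{2φ} |dz|²`. -/
noncomputable def gaussK (φ : ℂ → ℝ) : ℂ → ℂ := fun z =>
  (-2 : ℂ) * (Real.exp (-2 * φ z) : ℂ) * pdz (pdzbar (phiC φ)) z

/-- The Laplace–Beltrami operator `Δ_g f = 2 e^{-2φ} ∂_z ∂_z̄ f` of `g = 2 e^{2φ} |dz|²`. -/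
noncomputable def lapg (φ : ℂ → ℝ) (f : ℂ → ℂ) : ℂ → ℂ := fun z =>
  (2 : ℂ) * (Real.exp (-2 * φ z) : ℂ) * pdz (pdzbar f) z

/-- Second covariant derivative `K_{;z̄z̄} = ∂_z̄² K - 2 (∂_z̄ φ)(∂_z̄ K)`. -/
noncomputable def Kzb2 (φ : ℂ → ℝ) : ℂ → ℂ := fun z =>
  pdzbar (pdzbar (gaussK φ)) z - 2 * pdzbar (phiC φ) z * pdzbar (gaussK φ) z

/-- Third covariant derivative `K_{;z̄z̄z} = ∂_z K_{;z̄z̄}`. -/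
noncomputable def Kzb2z (φ : ℂ → ℝ) : ℂ → ℂ := fun z => pdz (Kzb2 φ) z

/-- Fourth covariant derivative `K_{;z̄z̄zz} = ∂_z K_{;z̄z̄z} - 2 (∂_z φ) K_{;z̄z̄z}`. -/
noncomputable def Kzb2z2 (φ : ℂ → ℝ) : ℂ → ℂ := fun z =>
  pdz (Kzb2z φ) z - 2 * pdz (phiC φ) z * Kzb2z φ z

/-- The Euclidean Laplacian `Δ = ∂_x² + ∂_y²` on real-valued functions on `ℂ ≅ ℝ²`. -/
noncomputable def lapR (f : ℂ → ℝ) : ℂ → ℝ := fun z =>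
  fderiv ℝ (fun w => fderiv ℝ f w 1) z 1 + fderiv ℝ (fun w => fderiv ℝ f w Complex.I) z Complex.I

/-!
Conjugation exchanges `∂_z` and `∂_z̄`, and these commute on smooth functions, so for a real
function `f` we have `conj (∂_z^m ∂_z̄^n f) = ∂_z^n ∂_z̄^m f`. Expanding `K_{;z̄z̄zz}` by the
product rule, every term is real or paired with its conjugate, except
`-2 (∂_z u - 2 ∂_zφ u) ∂_z̄K` with `u = ∂_z∂_z̄φ`. Since `K = -2 e^{-2φ} u`, we have
`∂_zK = -2 e^{-2φ} (∂_z u - 2 ∂_zφ u)`, so that term is `e^{2φ} |∂_zK|²`, which is real as well.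
-/

open ComplexConjugate Set

theorem Set.EqOn.iterate {α β : Type*} {s : Set α} {L : (α → β) → α → β}
    (hL : ∀ {f g}, EqOn f g s → EqOn (L f) (L g) s) {f g : α → β} (h : EqOn f g s) (n : ℕ) :
    EqOn (L^[n] f) (L^[n] g) s := by
  induction n generalizing f g with
  | zero => exact h
  | succ n ih => simpa only [Function.iterate_succ_apply] using ih (hL h)

section WirtingerCalculus

variable {f g : ℂ → ℂ} {z : ℂ}

theorem pdz_mul (hf : DifferentiableAt ℝ f z) (hg : DifferentiableAt ℝ g z) :
    pdz (fun w => f w * g w) z = pdz f z * g z + f z * pdz g z := by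
  simp only [pdz, pdx, pdy, fderiv_fun_mul hf hg, add_apply, smul_apply, smul_eq_mul]
  ring

theorem pdz_sub (hf : DifferentiableAt ℝ f z) (hg : DifferentiableAt ℝ g z) :
    pdz (fun w => f w - g w) z = pdz f z - pdz g z := by
  simp only [pdz, pdx, pdy, fderiv_fun_sub hf hg, sub_apply]
  ring

theorem pdz_const (c : ℂ) : pdz (fun _ => c) z = 0 := by
  simp [pdz, pdx, pdy]

theorem pdz_const_mul (hf : DifferentiableAt ℝ f z) (c : ℂ) :
    pdz (fun w => c * f w) z = c * pdz f z := by
  simp only [pdz, pdx, pdy, fderiv_const_mul hf c, smul_apply, smul_eq_mul]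
  ring

theorem pdz_cexp (hf : DifferentiableAt ℝ f z) :
    pdz (fun w => cexp (f w)) z = cexp (f z) * pdz f z := by
  simp only [pdz, pdx, pdy, hf.hasFDerivAt.cexp.fderiv, smul_apply, smul_eq_mul]
  ring

theorem fderiv_conj (hf : DifferentiableAt ℝ f z) :
    fderiv ℝ (fun w => conj (f w)) z = conjCLE.toContinuousLinearMap.comp (fderiv ℝ f z) :=
  (conjCLE.toContinuousLinearMap.hasFDerivAt.comp z hf.hasFDerivAt).fderiv

theorem pdz_conj (hf : DifferentiableAt ℝ f z) :
    pdz (fun w => conj (f w)) z = conj (pdzbar f z) := by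
  simp [pdz, pdzbar, pdx, pdy, fderiv_conj hf, map_ofNat]
  ring

theorem pdzbar_conj (hf : DifferentiableAt ℝ f z) :
    pdzbar (fun w => conj (f w)) z = conj (pdz f z) := by
  simp [pdz, pdzbar, pdx, pdy, fderiv_conj hf, map_ofNat]

theorem pdz_pdzbar_comm (hf : ContDiffAt ℝ 2 f z) : pdz (pdzbar f) z = pdzbar (pdz f) z := by
  have hD : HasFDerivAt (fderiv ℝ f) (fderiv ℝ (fderiv ℝ f) z) z :=
    ((hf.fderiv_right (m := 1) le_rfl).differentiableAt one_ne_zero).hasFDerivAt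
  have h1 := hD.clm_apply (hasFDerivAt_const 1 z)
  have hI := hD.clm_apply (hasFDerivAt_const I z)
  have hbar : HasFDerivAt (pdzbar f) _ z := (h1.add (hI.const_mul I)).const_mul (1 / 2)
  have hz : HasFDerivAt (pdz f) _ z := (h1.sub (hI.const_mul I)).const_mul (1 / 2)
  have hsymm := hf.isSymmSndFDerivAt (by simp [minSmoothness_of_isRCLikeNormedField]) 1 I
  simp [pdz, pdzbar, pdx, pdy, hbar.fderiv, hz.fderiv, hsymm]
  ring

end WirtingerCalculus

section OpenSet

variable {U : Set ℂ} {f g : ℂ → ℂ}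

theorem Set.EqOn.pdz (hU : IsOpen U) (h : EqOn f g U) : EqOn (pdz f) (pdz g) U := fun w hw => by
  simp [_root_.pdz, pdx, pdy, (h.eventuallyEq_of_mem (hU.mem_nhds hw)).fderiv_eq]

theorem Set.EqOn.pdzbar (hU : IsOpen U) (h : EqOn f g U) : EqOn (pdzbar f) (pdzbar g) U :=
  fun w hw => by
    simp [_root_.pdzbar, pdx, pdy, (h.eventuallyEq_of_mem (hU.mem_nhds hw)).fderiv_eq]

theorem ContDiffOn.differentiableAt_of_isOpen {z : ℂ} (hf : ContDiffOn ℝ ∞ f U) (hU : IsOpen U)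
    (hz : z ∈ U) : DifferentiableAt ℝ f z :=
  (hf.contDiffAt (hU.mem_nhds hz)).differentiableAt (by simp)

theorem contDiffOn_pdz (hU : IsOpen U) (hf : ContDiffOn ℝ ∞ f U) : ContDiffOn ℝ ∞ (pdz f) U := by
  have hD := hf.fderiv_of_isOpen hU (m := ∞) le_rfl
  exact contDiffOn_const.mul ((hD.clm_apply contDiffOn_const).sub
    (contDiffOn_const.mul (hD.clm_apply contDiffOn_const)))

theorem contDiffOn_pdzbar (hU : IsOpen U) (hf : ContDiffOn ℝ ∞ f U) :
    ContDiffOn ℝ ∞ (pdzbar f) U := by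
  have hD := hf.fderiv_of_isOpen hU (m := ∞) le_rfl
  exact contDiffOn_const.mul ((hD.clm_apply contDiffOn_const).add
    (contDiffOn_const.mul (hD.clm_apply contDiffOn_const)))

theorem contDiffOn_iterate_pdz (hU : IsOpen U) (hf : ContDiffOn ℝ ∞ f U) (n : ℕ) :
    ContDiffOn ℝ ∞ (pdz^[n] f) U :=
  Function.Iterate.rec _ hf (fun _ => contDiffOn_pdz hU) n

theorem contDiffOn_iterate_pdzbar (hU : IsOpen U) (hf : ContDiffOn ℝ ∞ f U) (n : ℕ) :
    ContDiffOn ℝ ∞ (pdzbar^[n] f) U :=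
  Function.Iterate.rec _ hf (fun _ => contDiffOn_pdzbar hU) n

theorem pdz_pdzbar_eqOn (hU : IsOpen U) (hf : ContDiffOn ℝ ∞ f U) :
    EqOn (pdz (pdzbar f)) (pdzbar (pdz f)) U := fun _ hw =>
  pdz_pdzbar_comm ((hf.contDiffAt (hU.mem_nhds hw)).of_le ENat.LEInfty.out)

theorem pdzbar_iterate_pdz_eqOn (hU : IsOpen U) (hf : ContDiffOn ℝ ∞ f U) (n : ℕ) :
    EqOn (pdzbar (pdz^[n] f)) (pdz^[n] (pdzbar f)) U := by
  induction n generalizing f with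
  | zero => exact fun _ _ => rfl
  | succ n ih =>
    simp only [Function.iterate_succ_apply]
    exact (ih (contDiffOn_pdz hU hf)).trans
      (EqOn.iterate (fun h => h.pdz hU) (pdz_pdzbar_eqOn hU hf).symm n)

theorem iterate_pdzbar_iterate_pdz_eqOn (hU : IsOpen U) (hf : ContDiffOn ℝ ∞ f U) (m n : ℕ) :
    EqOn (pdzbar^[m] (pdz^[n] f)) (pdz^[n] (pdzbar^[m] f)) U := by
  induction m generalizing f with
  | zero => exact fun _ _ => rfl
  | succ m ih =>
    simp only [Function.iterate_succ_apply]
    exact (EqOn.iterate (fun h => h.pdzbar hU) (pdzbar_iterate_pdz_eqOn hU hf n) m).trans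
      (ih (contDiffOn_pdzbar hU hf))

theorem conj_iterate_pdz_eqOn (hU : IsOpen U) (hf : ContDiffOn ℝ ∞ f U) (n : ℕ) :
    EqOn (fun w => conj (pdz^[n] f w)) (pdzbar^[n] (fun w => conj (f w))) U := by
  induction n generalizing f with
  | zero => exact fun _ _ => rfl
  | succ n ih =>
    simp only [Function.iterate_succ_apply]
    refine (ih (contDiffOn_pdz hU hf)).trans
      (EqOn.iterate (fun h => h.pdzbar hU) (fun w hw => ?_) n)
    exact (pdzbar_conj (hf.differentiableAt_of_isOpen hU hw)).symm

theorem conj_iterate_pdzbar_eqOn (hU : IsOpen U) (hf : ContDiffOn ℝ ∞ f U) (n : ℕ) :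
    EqOn (fun w => conj (pdzbar^[n] f w)) (pdz^[n] (fun w => conj (f w))) U := by
  induction n generalizing f with
  | zero => exact fun _ _ => rfl
  | succ n ih =>
    simp only [Function.iterate_succ_apply]
    refine (ih (contDiffOn_pdzbar hU hf)).trans
      (EqOn.iterate (fun h => h.pdz hU) (fun w hw => ?_) n)
    exact (pdz_conj (hf.differentiableAt_of_isOpen hU hw)).symm

noncomputable def wirtinger (m n : ℕ) (f : ℂ → ℂ) : ℂ → ℂ := pdz^[m] (pdzbar^[n] f)

theorem pdz_wirtinger (m n : ℕ) (f : ℂ → ℂ) : pdz (wirtinger m n f) = wirtinger (m + 1) n f :=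
  (Function.iterate_succ_apply' _ _ _).symm

theorem contDiffOn_wirtinger (hU : IsOpen U) (hf : ContDiffOn ℝ ∞ f U) (m n : ℕ) :
    ContDiffOn ℝ ∞ (wirtinger m n f) U :=
  contDiffOn_iterate_pdz hU (contDiffOn_iterate_pdzbar hU hf n) m

theorem conj_wirtinger_eqOn (hU : IsOpen U) (hf : ContDiffOn ℝ ∞ f U)
    (hreal : EqOn (fun w => conj (f w)) f U) (m n : ℕ) :
    EqOn (fun w => conj (wirtinger m n f w)) (wirtinger n m f) U :=
  (conj_iterate_pdz_eqOn hU (contDiffOn_iterate_pdzbar hU hf n) m).trans <|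
    (EqOn.iterate (fun h => h.pdzbar hU) ((conj_iterate_pdzbar_eqOn hU hf n).trans
      (EqOn.iterate (fun h => h.pdz hU) hreal n)) m).trans
    (iterate_pdzbar_iterate_pdz_eqOn hU hf m n)

end OpenSet

section GaussCurvature

variable {U : Set ℂ} {φ : ℂ → ℝ}

theorem contDiffOn_phiC (hφ : ContDiffOn ℝ ∞ φ U) : ContDiffOn ℝ ∞ (phiC φ) U :=
  ofRealCLM.contDiff.comp_contDiffOn hφ

theorem conj_wirtinger_phiC_eqOn (hU : IsOpen U) (hφ : ContDiffOn ℝ ∞ φ U) (m n : ℕ) :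
    EqOn (fun w => conj (wirtinger m n (phiC φ) w)) (wirtinger n m (phiC φ)) U :=
  conj_wirtinger_eqOn hU (contDiffOn_phiC hφ) (fun _ _ => conj_ofReal _) m n

theorem gaussK_eq (φ : ℂ → ℝ) :
    gaussK φ = fun w => -2 * cexp (-2 * phiC φ w) * wirtinger 1 1 (phiC φ) w := by
  funext w
  simp [gaussK, phiC, wirtinger]

theorem contDiffOn_gaussK (hU : IsOpen U) (hφ : ContDiffOn ℝ ∞ φ U) :
    ContDiffOn ℝ ∞ (gaussK φ) U := by
  rw [gaussK_eq]
  exact (contDiffOn_const.mul (contDiff_exp.comp_contDiffOn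
    (contDiffOn_const.mul (contDiffOn_phiC hφ)))).mul
    (contDiffOn_wirtinger hU (contDiffOn_phiC hφ) 1 1)

theorem conj_gaussK_eqOn (hU : IsOpen U) (hφ : ContDiffOn ℝ ∞ φ U) :
    EqOn (fun w => conj (gaussK φ w)) (gaussK φ) U := fun w hw => by
  have hU11 := conj_wirtinger_phiC_eqOn hU hφ 1 1 hw
  simp only [wirtinger, Function.iterate_one] at hU11
  simp only [gaussK, map_mul, map_neg, map_ofNat, conj_ofReal, hU11]

theorem pdz_gaussK_eqOn (hU : IsOpen U) (hφ : ContDiffOn ℝ ∞ φ U) :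
    EqOn (pdz (gaussK φ)) (fun w => -2 * cexp (-2 * phiC φ w) *
      (wirtinger 2 1 (phiC φ) w - 2 * wirtinger 1 0 (phiC φ) w * wirtinger 1 1 (phiC φ) w)) U :=
  fun w hw => by
    have hψ := (contDiffOn_phiC hφ).differentiableAt_of_isOpen hU hw
    have hU11 := (contDiffOn_wirtinger hU (contDiffOn_phiC hφ) 1 1).differentiableAt_of_isOpen hU hw
    rw [gaussK_eq, pdz_mul ((hψ.const_mul _).cexp.const_mul _) hU11,
      pdz_const_mul (hψ.const_mul _).cexp, pdz_cexp (hψ.const_mul _), pdz_const_mul hψ]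
    simp only [wirtinger, Function.iterate_succ_apply, Function.iterate_zero_apply]
    ring

theorem Kzb2z2_eq (hU : IsOpen U) (hφ : ContDiffOn ℝ ∞ φ U) {z : ℂ} (hz : z ∈ U) :
    Kzb2z2 φ z = wirtinger 2 2 (gaussK φ) z
      - 2 * wirtinger 2 1 (phiC φ) z * wirtinger 0 1 (gaussK φ) z
      - 4 * wirtinger 1 1 (phiC φ) z * wirtinger 1 1 (gaussK φ) z
      - 2 * wirtinger 0 1 (phiC φ) z * wirtinger 2 1 (gaussK φ) z
      - 2 * wirtinger 1 0 (phiC φ) z * wirtinger 1 2 (gaussK φ) z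
      + 4 * wirtinger 1 0 (phiC φ) z * wirtinger 1 1 (phiC φ) z * wirtinger 0 1 (gaussK φ) z
      + 4 * wirtinger 1 0 (phiC φ) z * wirtinger 0 1 (phiC φ) z * wirtinger 1 1 (gaussK φ) z := by
  have dK : ∀ m n, ∀ w ∈ U, DifferentiableAt ℝ (wirtinger m n (gaussK φ)) w := fun m n _ hw =>
    (contDiffOn_wirtinger hU (contDiffOn_gaussK hU hφ) m n).differentiableAt_of_isOpen hU hw
  have dψ : ∀ m n, ∀ w ∈ U, DifferentiableAt ℝ (wirtinger m n (phiC φ)) w := fun m n _ hw =>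
    (contDiffOn_wirtinger hU (contDiffOn_phiC hφ) m n).differentiableAt_of_isOpen hU hw
  have hKzb2z : EqOn (Kzb2z φ) (fun w => wirtinger 1 2 (gaussK φ) w
      - 2 * wirtinger 1 1 (phiC φ) w * wirtinger 0 1 (gaussK φ) w
      - 2 * wirtinger 0 1 (phiC φ) w * wirtinger 1 1 (gaussK φ) w) U := fun w hw => by
    show pdz (fun w => wirtinger 0 2 (gaussK φ) w
      - 2 * wirtinger 0 1 (phiC φ) w * wirtinger 0 1 (gaussK φ) w) w = _
    have hK02 := dK 0 2 w hw
    have hK01 := dK 0 1 w hw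
    have hψ01 := dψ 0 1 w hw
    simp (disch := fun_prop) only [pdz_sub, pdz_mul, pdz_wirtinger, pdz_const]
    ring
  show pdz (Kzb2z φ) z - 2 * wirtinger 1 0 (phiC φ) z * Kzb2z φ z = _
  rw [hKzb2z.pdz hU hz, hKzb2z hz]
  have hK12 := dK 1 2 z hz
  have hK01 := dK 0 1 z hz
  have hK11 := dK 1 1 z hz
  have hψ11 := dψ 1 1 z hz
  have hψ01 := dψ 0 1 z hz
  simp (disch := fun_prop) only [pdz_sub, pdz_mul, pdz_wirtinger, pdz_const]
  ring

theorem conj_Kzb2z2 (hU : IsOpen U) (hφ : ContDiffOn ℝ ∞ φ U) {z : ℂ} (hz : z ∈ U) :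
    conj (Kzb2z2 φ z) = Kzb2z2 φ z := by
  have hK : ∀ m n, conj (wirtinger m n (gaussK φ) z) = wirtinger n m (gaussK φ) z := fun m n =>
    conj_wirtinger_eqOn hU (contDiffOn_gaussK hU hφ) (conj_gaussK_eqOn hU hφ) m n hz
  have hψ : ∀ m n, conj (wirtinger m n (phiC φ) z) = wirtinger n m (phiC φ) z := fun m n =>
    conj_wirtinger_phiC_eqOn hU hφ m n hz
  have hE : conj (cexp (-2 * phiC φ z)) = cexp (-2 * phiC φ z) := by
    simp [← exp_conj, phiC, map_ofNat]
  have h10 : wirtinger 1 0 (gaussK φ) z = -2 * cexp (-2 * phiC φ z) *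
      (wirtinger 2 1 (phiC φ) z - 2 * wirtinger 1 0 (phiC φ) z * wirtinger 1 1 (phiC φ) z) :=
    pdz_gaussK_eqOn hU hφ hz
  have h01 : wirtinger 0 1 (gaussK φ) z = -2 * cexp (-2 * phiC φ z) *
      (wirtinger 1 2 (phiC φ) z - 2 * wirtinger 0 1 (phiC φ) z * wirtinger 1 1 (phiC φ) z) := by
    rw [← hK 1 0, h10]
    simp only [map_mul, map_sub, map_neg, map_ofNat, hE, hψ]
  rw [Kzb2z2_eq hU hφ hz]
  simp only [map_add, map_sub, map_mul, map_ofNat, hK, hψ]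
  linear_combination
    2 * (wirtinger 2 1 (phiC φ) z - 2 * wirtinger 1 0 (phiC φ) z * wirtinger 1 1 (phiC φ) z) * h01
    - 2 * (wirtinger 1 2 (phiC φ) z - 2 * wirtinger 0 1 (phiC φ) z * wirtinger 1 1 (phiC φ) z) * h10

end GaussCurvature

/-- Lemma 4.3 of the paper, final assertion: `K_{;z̄z̄zz}` is real-valued. -/
theorem Kzbzbzz_real (U : Set ℂ) (hU : IsOpen U) (φ : ℂ → ℝ)
    (hφ : ContDiffOn ℝ ∞ φ U) :
    ∀ z ∈ U, (Kzb2z2 φ z).im = 0 := fun _ hz =>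
  conj_eq_iff_im.mp (conj_Kzb2z2 hU hφ hz)
end

section
/- Let U ⊆ ℂ ≅ ℝ² be a connected open neighborhood of 0 and let φ₁, φ₂ : U → ℝ be real analytic functions such that, with K_i := −2 e^{−2φ_i} ∂_z∂_{z̄}φ_i, both satisfy ∂_x²K_i − ∂_y²K_i − 2(∂_xφ_i)(∂_xK_i) + 2(∂_yφ_i)(∂_yK_i) = 0 on U. If there is an open interval I ∋ 0 with I × {0} ⊆ U such that ∂_y^j φ₁ (x, 0) = ∂_y^j φ₂ (x, 0) for all x ∈ I and all j = 0, 1, 2, 3, then φ₁ = φ₂ on some open neighborhood of 0. -/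
open Complex
open scoped ContDiff

/-- The real part (times 4) of the sphericity equation `K_{;z̄z̄} = 0`:
`∂_x²K - ∂_y²K - 2(∂_xφ)(∂_xK) + 2(∂_yφ)(∂_yK)`. -/
noncomputable def sphRe (φ : ℂ → ℝ) : ℂ → ℂ := fun z =>
  pdx (pdx (gaussK φ)) z - pdy (pdy (gaussK φ)) z
    - 2 * pdx (phiC φ) z * pdx (gaussK φ) z + 2 * pdy (phiC φ) z * pdy (gaussK φ) z

/-- Partial derivative in the `y`-direction for real-valued functions on `ℂ ≅ ℝ²`. -/
noncomputable def pdyR (f : ℂ → ℝ) : ℂ → ℝ := fun z => fderiv ℝ f z Complex.I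

/-!
Along the real segment `I` the equation determines `∂_y⁴φ` from lower `y`-derivatives, through the
curvature `K = -½ e^{-2φ} Δφ`: it expresses `∂_y²K` by `∂_x²K`, `∂_xK`, `∂_yK` and first
derivatives of `φ`, and `∂_y²φ = -2 e^{2φ} K - ∂_x²φ`; moreover `x`-derivatives along `I` are
determined by values on `I`. So two analytic solutions with the same `y`-derivatives of order
`≤ m + 3` along `I` have the same ones of order `m + 4`. By induction from the Cauchy data all
`y`-derivatives agree along `I`, hence all partial derivatives agree at `0`, and two real analytic
functions with the same Taylor series at `0` agree near `0`.
-/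

open Filter Topology

section DirDeriv

variable {E F G : Type*} [NormedAddCommGroup E] [NormedSpace ℝ E]
  [NormedAddCommGroup F] [NormedSpace ℝ F] [NormedAddCommGroup G] [NormedSpace ℝ G]
  {f g : E → F} {x : E} {u v : E}

noncomputable def dirDeriv (v : E) (f : E → F) : E → F := fun z => fderiv ℝ f z v

protected theorem Filter.EventuallyEq.dirDeriv (h : f =ᶠ[𝓝 x] g) :
    dirDeriv v f =ᶠ[𝓝 x] dirDeriv v g :=
  (h.fderiv (𝕜 := ℝ)).mono fun _ hz => by simp only [dirDeriv, hz]

theorem Filter.EventuallyEq.iterate_dirDeriv (h : f =ᶠ[𝓝 x] g) (c : ℕ) :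
    (dirDeriv v)^[c] f =ᶠ[𝓝 x] (dirDeriv v)^[c] g := by
  induction c generalizing f g with
  | zero => exact h
  | succ c ih => exact ih h.dirDeriv

variable [CompleteSpace F]

protected theorem AnalyticAt.dirDeriv (hf : AnalyticAt ℝ f x) : AnalyticAt ℝ (dirDeriv v f) x :=
  (ContinuousLinearMap.apply ℝ F v).analyticAt _ |>.comp hf.fderiv

theorem AnalyticAt.iterate_dirDeriv (hf : AnalyticAt ℝ f x) (c : ℕ) :
    AnalyticAt ℝ ((dirDeriv v)^[c] f) x := by
  induction c generalizing f with
  | zero => exact hf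
  | succ c ih => exact ih hf.dirDeriv

theorem AnalyticAt.dirDeriv_fun_add (hf : AnalyticAt ℝ f x) (hg : AnalyticAt ℝ g x) (v : E) :
    dirDeriv v (fun z => f z + g z) =ᶠ[𝓝 x] fun z => dirDeriv v f z + dirDeriv v g z := by
  filter_upwards [hf.eventually_analyticAt, hg.eventually_analyticAt] with z hfz hgz
  simp [dirDeriv, fderiv_fun_add hfz.differentiableAt hgz.differentiableAt]

theorem AnalyticAt.dirDeriv_clm_comp (L : F →L[ℝ] G) (hf : AnalyticAt ℝ f x) (v : E) :
    dirDeriv v (fun z => L (f z)) =ᶠ[𝓝 x] fun z => L (dirDeriv v f z) := by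
  filter_upwards [hf.eventually_analyticAt] with z hz
  simp only [dirDeriv, show (fun z => L (f z)) = L ∘ f from rfl,
    (L.hasFDerivAt.comp z hz.differentiableAt.hasFDerivAt).fderiv]
  rfl

theorem AnalyticAt.iterate_dirDeriv_clm_comp (L : F →L[ℝ] G) (hf : AnalyticAt ℝ f x) (c : ℕ) :
    (dirDeriv v)^[c] (fun z => L (f z)) =ᶠ[𝓝 x] fun z => L ((dirDeriv v)^[c] f z) := by
  induction c generalizing f with
  | zero => rfl
  | succ c ih => exact ((hf.dirDeriv_clm_comp L v).iterate_dirDeriv c).trans (ih hf.dirDeriv)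

theorem AnalyticAt.dirDeriv_comm (hf : AnalyticAt ℝ f x) :
    dirDeriv u (dirDeriv v f) x = dirDeriv v (dirDeriv u f) x := by
  have hsymm : IsSymmSndFDerivAt ℝ f x :=
    (hf.contDiffAt (n := 2)).isSymmSndFDerivAt (by simp [minSmoothness_of_isRCLikeNormedField])
  have hd : ∀ a b, dirDeriv a (dirDeriv b f) x = fderiv ℝ (fderiv ℝ f) x a b := fun a b =>
    (hf.fderiv.dirDeriv_clm_comp (ContinuousLinearMap.apply ℝ F b) a).eq_of_nhds
  rw [hd, hd, hsymm]

theorem AnalyticAt.iterate_dirDeriv_comm (hf : AnalyticAt ℝ f x) (c : ℕ) :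
    (dirDeriv u)^[c] (dirDeriv v f) =ᶠ[𝓝 x] dirDeriv v ((dirDeriv u)^[c] f) := by
  induction c generalizing f with
  | zero => rfl
  | succ c ih =>
    have hcomm : dirDeriv u (dirDeriv v f) =ᶠ[𝓝 x] dirDeriv v (dirDeriv u f) :=
      hf.eventually_analyticAt.mono fun _ hz => hz.dirDeriv_comm
    exact (hcomm.iterate_dirDeriv c).trans (ih hf.dirDeriv)

end DirDeriv

section RealValued

variable {E : Type*} [NormedAddCommGroup E] [NormedSpace ℝ E] {f g : E → ℝ} {x : E}

theorem AnalyticAt.dirDeriv_fun_mul (hf : AnalyticAt ℝ f x) (hg : AnalyticAt ℝ g x) (v : E) :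
    dirDeriv v (fun z => f z * g z) =ᶠ[𝓝 x]
      fun z => f z * dirDeriv v g z + g z * dirDeriv v f z := by
  filter_upwards [hf.eventually_analyticAt, hg.eventually_analyticAt] with z hfz hgz
  simp [dirDeriv, fderiv_fun_mul hfz.differentiableAt hgz.differentiableAt]

theorem AnalyticAt.dirDeriv_rexp (hf : AnalyticAt ℝ f x) (v : E) :
    dirDeriv v (fun z => Real.exp (f z)) =ᶠ[𝓝 x] fun z => Real.exp (f z) * dirDeriv v f z := by
  filter_upwards [hf.eventually_analyticAt] with z hz
  simp [dirDeriv, hz.differentiableAt]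

theorem AnalyticAt.dirDeriv_ofReal {h : E → ℂ} (hf : AnalyticAt ℝ f x)
    (hh : h =ᶠ[𝓝 x] fun z => (f z : ℂ)) (v : E) :
    dirDeriv v h =ᶠ[𝓝 x] fun z => ((dirDeriv v f z : ℝ) : ℂ) :=
  hh.dirDeriv.trans (hf.dirDeriv_clm_comp Complex.ofRealCLM v)

end RealValued

local notation "∂ₓ" => dirDeriv (1 : ℂ)
local notation "∂ᵧ" => dirDeriv Complex.I

section Jets

variable {F : Type*} [NormedAddCommGroup F] [NormedSpace ℝ F]

theorem ContinuousLinearMap.ext_one_I {A B : ℂ →L[ℝ] F} (h1 : A 1 = B 1)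
    (hI : A Complex.I = B Complex.I) : A = B :=
  ContinuousLinearMap.coe_inj.1 <| Complex.basisOneI.ext fun i => by fin_cases i <;> simpa

theorem dirDeriv_one_eq_deriv {f : ℂ → F} {x : ℝ} (hf : DifferentiableAt ℝ f x) :
    dirDeriv 1 f x = deriv (fun t : ℝ => f t) x :=
  (hf.hasFDerivAt.comp_hasDerivAt x Complex.ofRealCLM.hasDerivAt).deriv.symm

/-- Analyticity along `I` is part of the relation, so that its closure properties below need no
side conditions. -/
structure JetEqOn (I : Set ℝ) (m : ℕ) (f g : ℂ → F) : Prop where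
  analyticAt_left : ∀ x ∈ I, AnalyticAt ℝ f x
  analyticAt_right : ∀ x ∈ I, AnalyticAt ℝ g x
  iterate_eq : ∀ c ≤ m, ∀ x ∈ I, (∂ᵧ)^[c] f x = (∂ᵧ)^[c] g x

namespace JetEqOn

variable {I : Set ℝ} {m n : ℕ} {f g f₁ f₂ g₁ g₂ : ℂ → F}

theorem mono (h : JetEqOn I m f g) (hnm : n ≤ m) : JetEqOn I n f g :=
  ⟨h.1, h.2, fun c hc => h.3 c (hc.trans hnm)⟩

theorem eq (h : JetEqOn I m f g) {x : ℝ} (hx : x ∈ I) : f x = g x :=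
  h.3 0 m.zero_le x hx

theorem zero_of_eq (hf : ∀ x ∈ I, AnalyticAt ℝ f x) (hg : ∀ x ∈ I, AnalyticAt ℝ g x)
    (h : ∀ x ∈ I, f x = g x) : JetEqOn I 0 f g :=
  ⟨hf, hg, fun c hc x hx => by rw [Nat.le_zero.1 hc]; exact h x hx⟩

theorem const (a : F) : JetEqOn I m (fun _ => a) (fun _ => a) :=
  ⟨fun _ _ => analyticAt_const, fun _ _ => analyticAt_const, fun _ _ _ _ => rfl⟩

theorem congr (h : JetEqOn I m f₁ f₂) (h₁ : ∀ x ∈ I, f₁ =ᶠ[𝓝 (x : ℂ)] g₁)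
    (h₂ : ∀ x ∈ I, f₂ =ᶠ[𝓝 (x : ℂ)] g₂) : JetEqOn I m g₁ g₂ := by
  refine ⟨fun x hx => (h.1 x hx).congr (h₁ x hx), fun x hx => (h.2 x hx).congr (h₂ x hx),
    fun c hc x hx => ?_⟩
  rw [← ((h₁ x hx).iterate_dirDeriv c).eq_of_nhds, ← ((h₂ x hx).iterate_dirDeriv c).eq_of_nhds]
  exact h.3 c hc x hx

variable [CompleteSpace F]

theorem succ_iff : JetEqOn I (m + 1) f g ↔ JetEqOn I m f g ∧ JetEqOn I m (∂ᵧ f) (∂ᵧ g) := by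
  refine ⟨fun h => ⟨h.mono m.le_succ, fun x hx => (h.1 x hx).dirDeriv,
    fun x hx => (h.2 x hx).dirDeriv, fun c hc => h.3 (c + 1) (by omega)⟩, ?_⟩
  rintro ⟨h, hy⟩
  refine ⟨h.1, h.2, fun c hc x hx => ?_⟩
  cases c with
  | zero => exact h.eq hx
  | succ c => exact hy.3 c (by omega) x hx

theorem dy (h : JetEqOn I (m + 1) f g) : JetEqOn I m (∂ᵧ f) (∂ᵧ g) :=
  (succ_iff.1 h).2

theorem of_dy (h : JetEqOn I m f g) (hy : JetEqOn I m (∂ᵧ f) (∂ᵧ g)) : JetEqOn I (m + 1) f g :=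
  succ_iff.2 ⟨h, hy⟩

theorem of_dy_dy (h : JetEqOn I (m + 1) f g) (hyy : JetEqOn I m (∂ᵧ (∂ᵧ f)) (∂ᵧ (∂ᵧ g))) :
    JetEqOn I (m + 2) f g :=
  h.of_dy (h.dy.of_dy hyy)

/-- The `x`-derivative along `I` is computed from values on `I` alone, and it commutes with `∂ᵧ`
at analytic points. -/
theorem dx (hI : IsOpen I) (h : JetEqOn I m f g) : JetEqOn I m (∂ₓ f) (∂ₓ g) := by
  refine ⟨fun x hx => (h.1 x hx).dirDeriv, fun x hx => (h.2 x hx).dirDeriv, fun c hc x hx => ?_⟩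
  have hf := h.1 x hx
  have hg := h.2 x hx
  rw [(hf.iterate_dirDeriv_comm c).eq_of_nhds, (hg.iterate_dirDeriv_comm c).eq_of_nhds,
    dirDeriv_one_eq_deriv (hf.iterate_dirDeriv c).differentiableAt,
    dirDeriv_one_eq_deriv (hg.iterate_dirDeriv c).differentiableAt]
  exact (eventuallyEq_of_mem (hI.mem_nhds hx) fun t ht => h.3 c hc t ht).deriv_eq

theorem add (hf : JetEqOn I m f₁ f₂) (hg : JetEqOn I m g₁ g₂) :
    JetEqOn I m (fun z => f₁ z + g₁ z) (fun z => f₂ z + g₂ z) := by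
  induction m generalizing f₁ f₂ g₁ g₂ with
  | zero =>
    exact .zero_of_eq (fun x hx => (hf.1 x hx).add (hg.1 x hx))
      (fun x hx => (hf.2 x hx).add (hg.2 x hx)) fun x hx => by rw [hf.eq hx, hg.eq hx]
  | succ m ih =>
    refine (ih (hf.mono m.le_succ) (hg.mono m.le_succ)).of_dy ((ih hf.dy hg.dy).congr ?_ ?_)
    · exact fun x hx => ((hf.1 x hx).dirDeriv_fun_add (hg.1 x hx) _).symm
    · exact fun x hx => ((hf.2 x hx).dirDeriv_fun_add (hg.2 x hx) _).symm

protected theorem fderiv (hI : IsOpen I) (h : JetEqOn I (m + 1) f g) :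
    JetEqOn I m (fderiv ℝ f) (fderiv ℝ g) := by
  refine ⟨fun x hx => (h.1 x hx).fderiv, fun x hx => (h.2 x hx).fderiv, fun c hc x hx => ?_⟩
  have happly : ∀ (k : ℂ → F), AnalyticAt ℝ k x → ∀ v : ℂ,
      (∂ᵧ)^[c] (fderiv ℝ k) x v = (∂ᵧ)^[c] (dirDeriv v k) x := fun k hk v =>
    ((hk.fderiv.iterate_dirDeriv_clm_comp (ContinuousLinearMap.apply ℝ F v) c).eq_of_nhds).symm
  refine ContinuousLinearMap.ext_one_I ?_ ?_
  · rw [happly f (h.1 x hx), happly g (h.2 x hx)]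
    exact ((h.mono m.le_succ).dx hI).3 c hc x hx
  · rw [happly f (h.1 x hx), happly g (h.2 x hx)]
    exact h.dy.3 c hc x hx

theorem iteratedFDeriv_eq (hI : IsOpen I) (h : ∀ m, JetEqOn I m f g) (n : ℕ) {x : ℝ}
    (hx : x ∈ I) : iteratedFDeriv ℝ n f x = iteratedFDeriv ℝ n g x := by
  induction n generalizing F with
  | zero => ext; simp [(h 0).eq hx]
  | succ n ih =>
    simp only [iteratedFDeriv_succ_eq_comp_right, Function.comp_apply]
    rw [ih fun m => (h (m + 1)).fderiv hI]

end JetEqOn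

end Jets

namespace JetEqOn

variable {I : Set ℝ} {m : ℕ} {f₁ f₂ g₁ g₂ : ℂ → ℝ}

theorem mul (hf : JetEqOn I m f₁ f₂) (hg : JetEqOn I m g₁ g₂) :
    JetEqOn I m (fun z => f₁ z * g₁ z) (fun z => f₂ z * g₂ z) := by
  induction m generalizing f₁ f₂ g₁ g₂ with
  | zero =>
    exact .zero_of_eq (fun x hx => (hf.1 x hx).mul (hg.1 x hx))
      (fun x hx => (hf.2 x hx).mul (hg.2 x hx)) fun x hx => by rw [hf.eq hx, hg.eq hx]
  | succ m ih =>
    have hf' := hf.mono m.le_succ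
    have hg' := hg.mono m.le_succ
    refine (ih hf' hg').of_dy (((ih hf' hg.dy).add (ih hg' hf.dy)).congr ?_ ?_)
    · exact fun x hx => ((hf.1 x hx).dirDeriv_fun_mul (hg.1 x hx) _).symm
    · exact fun x hx => ((hf.2 x hx).dirDeriv_fun_mul (hg.2 x hx) _).symm

theorem sub (hf : JetEqOn I m f₁ f₂) (hg : JetEqOn I m g₁ g₂) :
    JetEqOn I m (fun z => f₁ z - g₁ z) (fun z => f₂ z - g₂ z) := by
  simpa only [neg_one_mul, ← sub_eq_add_neg] using hf.add ((const (-1)).mul hg)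

theorem rexp (hf : JetEqOn I m f₁ f₂) :
    JetEqOn I m (fun z => Real.exp (f₁ z)) (fun z => Real.exp (f₂ z)) := by
  induction m generalizing f₁ f₂ with
  | zero =>
    exact .zero_of_eq (fun x hx => (hf.1 x hx).rexp') (fun x hx => (hf.2 x hx).rexp')
      fun x hx => by rw [hf.eq hx]
  | succ m ih =>
    have hf' := ih (hf.mono m.le_succ)
    refine hf'.of_dy ((hf'.mul hf.dy).congr ?_ ?_)
    · exact fun x hx => ((hf.1 x hx).dirDeriv_rexp _).symm
    · exact fun x hx => ((hf.2 x hx).dirDeriv_rexp _).symm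

end JetEqOn

section Taylor

variable {𝕜 E F : Type*} [NontriviallyNormedField 𝕜] [CharZero 𝕜]
  [NormedAddCommGroup E] [NormedSpace 𝕜 E] [NormedAddCommGroup F] [NormedSpace 𝕜 F]
  [CompleteSpace F]

theorem AnalyticAt.eventuallyEq_of_iteratedFDeriv_eq {f g : E → F} {x : E}
    (hf : AnalyticAt 𝕜 f x) (hg : AnalyticAt 𝕜 g x)
    (h : ∀ n, iteratedFDeriv 𝕜 n f x = iteratedFDeriv 𝕜 n g x) : f =ᶠ[𝓝 x] g := by
  obtain ⟨p, r, hp⟩ := hf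
  obtain ⟨q, s, hq⟩ := hg
  rw [← map_add_left_nhds_zero, EventuallyEq, eventually_map]
  filter_upwards [Metric.eball_mem_nhds 0 hp.r_pos, Metric.eball_mem_nhds 0 hq.r_pos]
    with y hyr hys
  exact (hp.hasSum_iteratedFDeriv hyr).unique (by simpa only [h] using hq.hasSum_iteratedFDeriv hys)

end Taylor

noncomputable def curvature (φ : ℂ → ℝ) : ℂ → ℝ :=
  fun z => -(1 / 2) * Real.exp (-2 * φ z) * lapR φ z

theorem lapR_eq_dirDeriv (φ : ℂ → ℝ) : lapR φ = fun z => ∂ₓ (∂ₓ φ) z + ∂ᵧ (∂ᵧ φ) z := rfl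

theorem dy_dy_eq_curvature (φ : ℂ → ℝ) (z : ℂ) :
    ∂ᵧ (∂ᵧ φ) z = -2 * Real.exp (2 * φ z) * curvature φ z - ∂ₓ (∂ₓ φ) z := by
  have hexp : Real.exp (2 * φ z) * Real.exp (-2 * φ z) = 1 := by
    rw [← Real.exp_add]; simp
  simp only [curvature, lapR_eq_dirDeriv]
  linear_combination -(∂ₓ (∂ₓ φ) z + ∂ᵧ (∂ᵧ φ) z) * hexp

protected theorem AnalyticAt.curvature {φ : ℂ → ℝ} {z : ℂ} (hφ : AnalyticAt ℝ φ z) :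
    AnalyticAt ℝ (curvature φ) z :=
  (analyticAt_const.mul (analyticAt_const.mul hφ).rexp').mul
    (hφ.dirDeriv.dirDeriv.add hφ.dirDeriv.dirDeriv)

theorem pdx_eq_dirDeriv : pdx = dirDeriv 1 := rfl

theorem pdy_eq_dirDeriv : pdy = dirDeriv Complex.I := rfl

theorem pdz_pdzbar {f : ℂ → ℂ} {z : ℂ} (hf : AnalyticAt ℝ f z) :
    pdz (pdzbar f) z = (pdx (pdx f) z + pdy (pdy f) z) / 4 := by
  have hx : DifferentiableAt ℝ (pdx f) z := hf.dirDeriv.differentiableAt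
  have hy : DifferentiableAt ℝ (pdy f) z := hf.dirDeriv.differentiableAt
  have hd : ∀ v, fderiv ℝ (pdzbar f) z v =
      1 / 2 * (fderiv ℝ (pdx f) z v + Complex.I * fderiv ℝ (pdy f) z v) := fun v => by
    rw [show pdzbar f = fun w => 1 / 2 * (pdx f w + Complex.I * pdy f w) from rfl,
      fderiv_const_mul (hx.fun_add (hy.const_mul _)), fderiv_fun_add hx (hy.const_mul _),
      fderiv_const_mul hy]
    simp [mul_add]
  have hcomm : fderiv ℝ (pdx f) z Complex.I = fderiv ℝ (pdy f) z 1 := hf.dirDeriv_comm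
  show 1 / 2 * (fderiv ℝ (pdzbar f) z 1 - Complex.I * fderiv ℝ (pdzbar f) z Complex.I) =
    (fderiv ℝ (pdx f) z 1 + fderiv ℝ (pdy f) z Complex.I) / 4
  rw [hd, hd, hcomm]
  linear_combination -(fderiv ℝ (pdy f) z Complex.I) / 4 * Complex.I_sq

theorem gaussK_eq_curvature {φ : ℂ → ℝ} {z : ℂ} (hφ : AnalyticAt ℝ φ z) :
    gaussK φ z = curvature φ z := by
  have hsecond : ∀ v : ℂ, dirDeriv v (dirDeriv v (phiC φ)) z = dirDeriv v (dirDeriv v φ) z :=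
    fun v => (hφ.dirDeriv.dirDeriv_ofReal (hφ.dirDeriv_ofReal EventuallyEq.rfl v) v).eq_of_nhds
  have hΦ : AnalyticAt ℝ (phiC φ) z := (Complex.ofRealCLM.analyticAt _).comp hφ
  rw [gaussK, pdz_pdzbar hΦ, pdx_eq_dirDeriv, pdy_eq_dirDeriv, hsecond, hsecond]
  simp only [curvature, lapR_eq_dirDeriv]
  push_cast
  ring

theorem dy_dy_curvature_of_sphRe_eq_zero {φ : ℂ → ℝ} {z : ℂ} (hφ : AnalyticAt ℝ φ z)
    (hsph : sphRe φ z = 0) :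
    ∂ᵧ (∂ᵧ (curvature φ)) z = ∂ₓ (∂ₓ (curvature φ)) z - 2 * ∂ₓ φ z * ∂ₓ (curvature φ) z
      + 2 * ∂ᵧ φ z * ∂ᵧ (curvature φ) z := by
  have hK : gaussK φ =ᶠ[𝓝 z] fun w => (curvature φ w : ℂ) :=
    hφ.eventually_analyticAt.mono fun _ hw => gaussK_eq_curvature hw
  have hfirst : ∀ v : ℂ,
      dirDeriv v (gaussK φ) =ᶠ[𝓝 z] fun w => ((dirDeriv v (curvature φ) w : ℝ) : ℂ) :=
    hφ.curvature.dirDeriv_ofReal hK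
  have hsecond : ∀ v : ℂ,
      dirDeriv v (dirDeriv v (gaussK φ)) z = dirDeriv v (dirDeriv v (curvature φ)) z :=
    fun v => (hφ.curvature.dirDeriv.dirDeriv_ofReal (hfirst v) v).eq_of_nhds
  have hphi : ∀ v : ℂ, dirDeriv v (phiC φ) z = dirDeriv v φ z :=
    fun v => (hφ.dirDeriv_ofReal EventuallyEq.rfl v).eq_of_nhds
  rw [sphRe, pdx_eq_dirDeriv, pdy_eq_dirDeriv, hsecond, hsecond, hphi, hphi,
    (hfirst 1).eq_of_nhds, (hfirst Complex.I).eq_of_nhds] at hsph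
  norm_cast at hsph
  linarith

namespace JetEqOn

variable {I : Set ℝ} {m : ℕ} {φ₁ φ₂ : ℂ → ℝ}

protected theorem curvature (hI : IsOpen I) (h : JetEqOn I (m + 2) φ₁ φ₂) :
    JetEqOn I m (curvature φ₁) (curvature φ₂) :=
  ((const _).mul ((const _).mul h).rexp |>.mono (by omega)).mul
    ((((h.dx hI).dx hI).mono (by omega)).add h.dy.dy)

theorem succ_of_sphRe_eq_zero (hI : IsOpen I) (h : JetEqOn I (m + 3) φ₁ φ₂)
    (hsph₁ : ∀ x ∈ I, ∀ᶠ z in 𝓝 (x : ℂ), sphRe φ₁ z = 0)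
    (hsph₂ : ∀ x ∈ I, ∀ᶠ z in 𝓝 (x : ℂ), sphRe φ₂ z = 0) :
    JetEqOn I (m + 4) φ₁ φ₂ := by
  have hK : JetEqOn I (m + 1) (curvature φ₁) (curvature φ₂) := h.curvature hI
  have hKx : JetEqOn I (m + 1) (∂ₓ (curvature φ₁)) (∂ₓ (curvature φ₂)) := hK.dx hI
  have hKyy : JetEqOn I m (∂ᵧ (∂ᵧ (curvature φ₁))) (∂ᵧ (∂ᵧ (curvature φ₂))) := by
    refine ((((hKx.dx hI).mono (by omega)).sub
      (((const 2).mul ((h.dx hI).mono (by omega))).mul (hKx.mono (by omega))))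
      |>.add (((const 2).mul (h.dy.mono (by omega))).mul hK.dy)).congr ?_ ?_
    · intro x hx
      filter_upwards [(h.1 x hx).eventually_analyticAt, hsph₁ x hx] with z hz hsph
      exact (dy_dy_curvature_of_sphRe_eq_zero hz hsph).symm
    · intro x hx
      filter_upwards [(h.2 x hx).eventually_analyticAt, hsph₂ x hx] with z hz hsph
      exact (dy_dy_curvature_of_sphRe_eq_zero hz hsph).symm
  have hφyy : JetEqOn I (m + 2) (∂ᵧ (∂ᵧ φ₁)) (∂ᵧ (∂ᵧ φ₂)) := by
    have hexp : JetEqOn I (m + 2) (fun z => Real.exp (2 * φ₁ z)) (fun z => Real.exp (2 * φ₂ z)) :=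
      ((const 2).mul (h.mono (by omega))).rexp
    refine ((((const (-2)).mul hexp).mul (hK.of_dy_dy hKyy)).sub
      (((h.dx hI).dx hI).mono (by omega))).congr ?_ ?_ <;>
    exact fun _ _ => Eventually.of_forall fun z => (dy_dy_eq_curvature _ z).symm
  exact h.of_dy_dy hφyy

end JetEqOn

theorem spherical_cauchy_uniqueness_general (U : Set ℂ) (hUopen : IsOpen U)
    (φ₁ φ₂ : ℂ → ℝ) (h₁ : AnalyticOnNhd ℝ φ₁ U) (h₂ : AnalyticOnNhd ℝ φ₂ U)
    (hpde₁ : ∀ z ∈ U, sphRe φ₁ z = 0) (hpde₂ : ∀ z ∈ U, sphRe φ₂ z = 0)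
    (I : Set ℝ) (hIopen : IsOpen I) (hI0 : (0 : ℝ) ∈ I)
    (hIU : ∀ x ∈ I, (x : ℂ) ∈ U)
    (hdata : ∀ j : Fin 4, ∀ x ∈ I,
      (pdyR^[(j : ℕ)] φ₁) (x : ℂ) = (pdyR^[(j : ℕ)] φ₂) (x : ℂ)) :
    ∃ V : Set ℂ, IsOpen V ∧ (0 : ℂ) ∈ V ∧ ∀ z ∈ V, φ₁ z = φ₂ z := by
  have hnear : ∀ {φ : ℂ → ℝ}, (∀ z ∈ U, sphRe φ z = 0) →
      ∀ x ∈ I, ∀ᶠ z in 𝓝 (x : ℂ), sphRe φ z = 0 :=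
    fun hpde x hx => eventually_of_mem (hUopen.mem_nhds (hIU x hx)) hpde
  have hcauchy : JetEqOn I 3 φ₁ φ₂ :=
    ⟨fun x hx => h₁ x (hIU x hx), fun x hx => h₂ x (hIU x hx),
      fun c hc => hdata ⟨c, by omega⟩⟩
  have hjets : ∀ m, JetEqOn I m φ₁ φ₂ := by
    have h : ∀ c, JetEqOn I (c + 3) φ₁ φ₂ := fun c => by
      induction c with
      | zero => exact hcauchy
      | succ c ih => exact ih.succ_of_sphRe_eq_zero hIopen (hnear hpde₁) (hnear hpde₂)
    exact fun m => (h m).mono (by omega)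
  have heq : φ₁ =ᶠ[𝓝 ((0 : ℝ) : ℂ)] φ₂ :=
    (h₁ _ (hIU 0 hI0)).eventuallyEq_of_iteratedFDeriv_eq (h₂ _ (hIU 0 hI0))
      fun n => JetEqOn.iteratedFDeriv_eq hIopen hjets n hI0
  obtain ⟨V, hV, hVopen, h0⟩ := eventually_nhds_iff.1 heq
  exact ⟨V, hVopen, by simpa using h0, hV⟩

/-- Lemma 4.6 of the paper, injectivity: two real analytic solutions of the
fourth-order equation `∂_x²K - ∂_y²K - 2(∂_xφ)(∂_xK) + 2(∂_yφ)(∂_yK) = 0` with the same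
4-jet Cauchy data on the line `{y = 0}` agree near the origin. -/
theorem spherical_cauchy_uniqueness (U : Set ℂ) (hUopen : IsOpen U)
    (hUconn : IsConnected U) (hU0 : (0 : ℂ) ∈ U)
    (φ₁ φ₂ : ℂ → ℝ) (h₁ : AnalyticOnNhd ℝ φ₁ U) (h₂ : AnalyticOnNhd ℝ φ₂ U)
    (hpde₁ : ∀ z ∈ U, sphRe φ₁ z = 0) (hpde₂ : ∀ z ∈ U, sphRe φ₂ z = 0)
    (I : Set ℝ) (hIopen : IsOpen I) (hI0 : (0 : ℝ) ∈ I) (hIint : I.OrdConnected)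
    (hIU : ∀ x ∈ I, (x : ℂ) ∈ U)
    (hdata : ∀ j : Fin 4, ∀ x ∈ I,
      (pdyR^[(j : ℕ)] φ₁) (x : ℂ) = (pdyR^[(j : ℕ)] φ₂) (x : ℂ)) :
    ∃ V : Set ℂ, IsOpen V ∧ (0 : ℂ) ∈ V ∧ ∀ z ∈ V, φ₁ z = φ₂ z :=
  spherical_cauchy_uniqueness_general U hUopen φ₁ φ₂ h₁ h₂ hpde₁ hpde₂ I hIopen hI0 hIU hdata
end
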